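/- arXiv:1805.04738 — 2 statements merged into one kernel-verified Lean document; each statement's English description precedes it below -/
import Mathlib

section
/- Consider the equation u + (1/2)|Du|² = 0 on the circle 𝕋 = ℝ/ℤ. Let u₁ be the 1-periodic even extension of the function x ↦ −x²/2 defined on [0, 1/2]. Then u₁ satisfies the following: (a) u₁ is Lipschitz; (b) at every point x where u₁ is differentiable, u₁(x) + (1/2)|u₁'(x)|² = 0; (c) the constant function u₂ ≡ 0 also satisfies u₂(x) + (1/2)|u₂'(x)|² = 0 everywhere. -/
/-!
Periodicity and evenness force `u₁ x = -‖x‖² / 2`, where `‖x‖ = |x - round x|` is the distance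
from `x` to `ℤ`, i.e. the norm of `x` in `ℝ/ℤ`; this is Lipschitz because the norm is. Since
`‖z‖ ≤ |z - n|` for every integer `n`, with equality at `z = x` for `n = round x`, the smooth
solution `z ↦ -(z - n)² / 2` touches `u₁` from below at `x`. Hence wherever `u₁` is
differentiable its derivative is `-(x - n)`, and the equation holds there; the kinks
`x ∈ 1/2 + ℤ` need no separate treatment.
-/

open Set Filter Topology

theorem Function.Periodic.apply_eq_apply_norm_coe {β : Type*} {f : ℝ → β} {p : ℝ}
    (hper : Function.Periodic f p) (heven : Function.Even f) (x : ℝ) :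
    f x = f ‖(x : AddCircle p)‖ := by
  rw [AddCircle.norm_eq, ← hper.sub_int_mul_eq (x := x) (round (p⁻¹ * x))]
  rcases abs_choice (x - round (p⁻¹ * x) * p) with h | h <;> rw [h]
  exact (heven _).symm

theorem HasDerivAt.eq_of_eventuallyLE_of_eq {f g : ℝ → ℝ} {p q x : ℝ} (hf : HasDerivAt f p x)
    (hg : HasDerivAt g q x) (hle : g ≤ᶠ[𝓝 x] f) (heq : f x = g x) : p = q := by
  have hmin : IsLocalMin (f - g) x := by
    filter_upwards [hle] with z hz
    simp only [Pi.sub_apply, heq, sub_self, sub_nonneg, hz]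
  exact sub_eq_zero.mp (hmin.hasDerivAt_eq_zero (hf.sub hg))

namespace UnitAddCircle

theorem norm_coe_le_abs_sub_intCast (x : ℝ) (n : ℤ) : ‖(x : UnitAddCircle)‖ ≤ |x - n| :=
  norm_eq (x := x) ▸ round_le x n

theorem norm_le_half (x : ℝ) : ‖(x : UnitAddCircle)‖ ≤ 1 / 2 :=
  norm_eq (x := x) ▸ abs_sub_round x

theorem lipschitzWith_neg_sq_norm_coe_div_two :
    LipschitzWith (1 / 2) fun x : ℝ => -‖(x : UnitAddCircle)‖ ^ 2 / 2 := by
  refine LipschitzWith.of_dist_le_mul fun x y => ?_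
  have hab : |‖(x : UnitAddCircle)‖ - ‖(y : UnitAddCircle)‖| ≤ |x - y| :=
    (abs_norm_sub_norm_le _ _).trans (QuotientAddGroup.norm_mk_le_norm (m := x - y))
  have ha := norm_le_half x
  have hb := norm_le_half y
  set a := ‖(x : UnitAddCircle)‖
  set b := ‖(y : UnitAddCircle)‖
  rw [Real.dist_eq, Real.dist_eq, NNReal.coe_div, NNReal.coe_one, NNReal.coe_two]
  calc |-a ^ 2 / 2 - -b ^ 2 / 2| = |a - b| * (a + b) / 2 := by
        rw [show -a ^ 2 / 2 - -b ^ 2 / 2 = -((a - b) * (a + b) / 2) by ring, abs_neg, abs_div,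
          abs_mul, abs_of_nonneg (by positivity : 0 ≤ a + b), abs_two]
    _ ≤ |x - y| * 1 / 2 := by gcongr; linarith
    _ = 1 / 2 * |x - y| := by ring

theorem neg_sq_norm_coe_div_two_add_sq_deriv_eq_zero {x p : ℝ}
    (h : HasDerivAt (fun x : ℝ => -‖(x : UnitAddCircle)‖ ^ 2 / 2) p x) :
    -‖(x : UnitAddCircle)‖ ^ 2 / 2 + 1 / 2 * p ^ 2 = 0 := by
  set n : ℝ := (round x : ℝ)
  have hnorm : ‖(x : UnitAddCircle)‖ ^ 2 = (x - n) ^ 2 := by rw [norm_eq, sq_abs]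
  have hg : HasDerivAt (fun z : ℝ => -(z - n) ^ 2 / 2) (-(x - n)) x := by
    have hsub : HasDerivAt (fun z : ℝ => z - n) 1 x := (hasDerivAt_id x).sub_const n
    exact ((hsub.pow 2).neg.div_const 2).congr_deriv (by ring)
  have hp : p = -(x - n) := h.eq_of_eventuallyLE_of_eq hg
    (Eventually.of_forall fun z => by
      have hz := pow_le_pow_left₀ (norm_nonneg _) (norm_coe_le_abs_sub_intCast z (round x)) 2
      rw [sq_abs] at hz
      dsimp only
      linarith)
    (by rw [hnorm])
  rw [hnorm, hp]
  ring

end UnitAddCircle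

/-- The even 1-periodic extension `u₁` of `x ↦ -x²/2` on `[0,1/2]` is Lipschitz and solves
`u + |u'|²/2 = 0` at every point of differentiability; the zero function also solves it. -/
theorem stmt_3 (u₁ : ℝ → ℝ)
    (hper : ∀ x : ℝ, u₁ (x + 1) = u₁ x)
    (heven : ∀ x : ℝ, u₁ (-x) = u₁ x)
    (hval : ∀ x ∈ Icc (0:ℝ) (1/2), u₁ x = -x ^ 2 / 2) :
    (∃ C : NNReal, LipschitzWith C u₁) ∧
    (∀ x p : ℝ, HasDerivAt u₁ p x → u₁ x + (1/2) * p ^ 2 = 0) ∧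
    (∀ x : ℝ, (fun _ : ℝ => (0:ℝ)) x
        + (1/2) * (deriv (fun _ : ℝ => (0:ℝ)) x) ^ 2 = 0) := by
  have hu : u₁ = fun x : ℝ => -‖(x : UnitAddCircle)‖ ^ 2 / 2 := funext fun x => by
    rw [Function.Periodic.apply_eq_apply_norm_coe hper heven x, hval]
    exact ⟨norm_nonneg _, UnitAddCircle.norm_le_half x⟩
  subst hu
  refine ⟨⟨_, UnitAddCircle.lipschitzWith_neg_sq_norm_coe_div_two⟩,
    fun x p h => UnitAddCircle.neg_sq_norm_coe_div_two_add_sq_deriv_eq_zero h, fun x => ?_⟩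
  simp
end

section
/- Let h_{·,·}(·,·) and h^{·,·}(·,·) be two functions M × ℝ × M × (0,∞) → ℝ related by the duality: h_{x₀,u₀}(x,t) = u if and only if h^{x,u}(x₀,t) = u₀, for all x₀, x ∈ M, u₀, u ∈ ℝ, t > 0. Assume both are strictly increasing in their second argument (the value u₀, resp. u). Define, for φ : M → ℝ, T⁻_t φ(x) := inf_{y ∈ M} h_{y,φ(y)}(x,t) and T⁺_t φ(x) := sup_{y ∈ M} h^{y,φ(y)}(x,t). Suppose v : M → ℝ satisfies T⁺_t v = v for all t > 0. Then T⁻_t v ≥ v pointwise for all t > 0. -/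
theorem stmt_6_general {M : Type*} (h H : M → ℝ → M → ℝ → ℝ)
    (hdual : ∀ (x₀ : M) (u₀ : ℝ) (x : M) (u : ℝ) (t : ℝ), 0 < t →
      (h x₀ u₀ x t = u ↔ H x u x₀ t = u₀))
    (Hmono : ∀ (x₀ : M) (u₁ u₂ : ℝ) (x : M) (t : ℝ), 0 < t → u₁ < u₂ →
      H x₀ u₁ x t < H x₀ u₂ x t)
    (v : M → ℝ)
    (hfix : ∀ t : ℝ, 0 < t → ∀ x : M,
      IsLUB (Set.range fun y => H y (v y) x t) (v x)) :
    ∀ t : ℝ, 0 < t → ∀ x y : M, v x ≤ h y (v y) x t := by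
  intro t ht x y
  have hH_strictMono : StrictMono fun u => H x u y t := fun _ _ hlt => Hmono x _ _ y t ht hlt
  have hH_dual : H x (h y (v y) x t) y t = v y := (hdual y (v y) x _ t ht).mp rfl
  have hH_le : H x (v x) y t ≤ v y := (hfix t ht y).1 ⟨x, rfl⟩
  exact hH_strictMono.le_iff_le.mp (hH_le.trans hH_dual.ge)

/-- If `v` is a fixed point of the forward semigroup `T⁺_t v(x) = sup_y h^{y,v(y)}(x,t)`
(expressed via `IsLUB`), then `T⁻_t v ≥ v` pointwise, i.e. `v x ≤ h_{y,v(y)}(x,t)` for all `y`.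
Here `h` is the forward and `H` the backward implicit action function, related by duality. -/
theorem stmt_6 {M : Type*} (h H : M → ℝ → M → ℝ → ℝ)
    (hdual : ∀ (x₀ : M) (u₀ : ℝ) (x : M) (u : ℝ) (t : ℝ), 0 < t →
      (h x₀ u₀ x t = u ↔ H x u x₀ t = u₀))
    (hmono : ∀ (x₀ : M) (u₁ u₂ : ℝ) (x : M) (t : ℝ), 0 < t → u₁ < u₂ →
      h x₀ u₁ x t < h x₀ u₂ x t)
    (Hmono : ∀ (x₀ : M) (u₁ u₂ : ℝ) (x : M) (t : ℝ), 0 < t → u₁ < u₂ →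
      H x₀ u₁ x t < H x₀ u₂ x t)
    (v : M → ℝ)
    (hfix : ∀ t : ℝ, 0 < t → ∀ x : M,
      IsLUB (Set.range fun y => H y (v y) x t) (v x)) :
    ∀ t : ℝ, 0 < t → ∀ x y : M, v x ≤ h y (v y) x t :=
  stmt_6_general h H hdual Hmono v hfix
end
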